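/- arXiv:2001.02425 — 3 statements merged into one kernel-verified Lean document; each statement's English description precedes it below -/
import Mathlib

section
/- Let L > n ≥ 0 be integers and let p, q be real parameters with p ≠ q. Then the restricted partition function is given explicitly by R(L, n; p, q) = ∑_{j=0}^{n} ((−1)^{n−j} / (j!·(n−j)!)) · (1 + j·p + (n−j)·q)^{L−1} / (p−q)^{n}. -/
open Finset

/-!
Replace the constant `1` in the weight by a parameter `u` and let `S(m, n, u)` be the resulting
sum over words of length `m` with `n` ones. Splitting off the first letter gives a recursion:
a leading `0` has all the ones after it and contributes the factor `u + q·n`, while a leading `1`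
raises the first summand of every later factor from `u` to `u + p`. Hence
`S(m+1, n+1, u) = (u + q(n+1)) S(m, n+1, u) + S(m, n, u + p)`, with `S(m, 0, u) = u^m` and
`S(0, n+1, u) = 0`. The explicit sum satisfies the same recursion, because its `(j+1)`-st base
`u + (j+1)p + (n-j)q` equals `(u + q(n+1)) + (j+1)(p - q)`, and it vanishes for `m = 0` by the
alternating binomial identity `(1 - 1)^n = 0`.
-/

/-- The stationary weight of a word `a` with entries in `{0,1}` (encoded as `Fin 2`):
the product over positions `i` with `a i = 0` of `1 + p·m_i(a) + q·n_i(a)`,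
where `m_i(a)` (resp. `n_i(a)`) is the number of `1`'s strictly before (resp. after) `i`. -/
noncomputable def wt (p q : ℝ) {m : ℕ} (a : Fin m → Fin 2) : ℝ :=
  ∏ i ∈ univ.filter (fun i => a i = 0),
    (1 + p * ((univ.filter (fun j => j < i ∧ a j = 1)).card : ℝ)
       + q * ((univ.filter (fun j => i < j ∧ a j = 1)).card : ℝ))

/-- The number of `1`'s in the word `a`. -/
def ones {m : ℕ} (a : Fin m → Fin 2) : ℕ := (univ.filter (fun i => a i = 1)).card

/-- The restricted partition function `R(L, n; p, q)`: the sum of the weights `wt p q a`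
over all words `a` of length `L - 1` with entries in `{0,1}` having exactly `n` ones. -/
noncomputable def R (L n : ℕ) (p q : ℝ) : ℝ :=
  ∑ a ∈ univ.filter (fun a : Fin (L - 1) → Fin 2 => ones a = n), wt p q a

noncomputable def baseWt (u p q : ℝ) {m : ℕ} (a : Fin m → Fin 2) : ℝ :=
  ∏ i ∈ univ.filter (fun i => a i = 0),
    (u + p * ((univ.filter (fun j => j < i ∧ a j = 1)).card : ℝ)
       + q * ((univ.filter (fun j => i < j ∧ a j = 1)).card : ℝ))

noncomputable def partitionSum (m n : ℕ) (u p q : ℝ) : ℝ :=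
  ∑ a ∈ univ.filter (fun a : Fin m → Fin 2 => ones a = n), baseWt u p q a

section Cons

variable {m : ℕ} (x : Fin 2) (b : Fin m → Fin 2)

lemma ones_cons :
    ones (Fin.cons x b : Fin (m + 1) → Fin 2) = (if x = 1 then 1 else 0) + ones b := by
  simp only [ones, card_filter]
  rw [Fin.sum_univ_succ]
  simp

lemma card_filter_lt_succ_cons (i : Fin m) :
    #{j | j < i.succ ∧ (Fin.cons x b : Fin (m + 1) → Fin 2) j = 1}
      = (if x = 1 then 1 else 0) + #{j | j < i ∧ b j = 1} := by
  simp only [card_filter]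
  rw [Fin.sum_univ_succ]
  simp [Fin.succ_pos]

lemma card_filter_succ_lt_cons (i : Fin m) :
    #{j | i.succ < j ∧ (Fin.cons x b : Fin (m + 1) → Fin 2) j = 1}
      = #{j | i < j ∧ b j = 1} := by
  simp only [card_filter]
  rw [Fin.sum_univ_succ]
  simp

lemma card_filter_zero_lt_cons :
    #{j | 0 < j ∧ (Fin.cons x b : Fin (m + 1) → Fin 2) j = 1} = ones b := by
  simp only [card_filter, ones]
  rw [Fin.sum_univ_succ]
  simp [Fin.succ_pos]

variable (u p q : ℝ)

lemma baseWt_cons_zero : baseWt u p q (Fin.cons 0 b) = (u + q * ones b) * baseWt u p q b := by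
  simp [baseWt, prod_filter, Fin.prod_univ_succ, card_filter_lt_succ_cons,
    card_filter_succ_lt_cons, card_filter_zero_lt_cons]

lemma baseWt_cons_one : baseWt u p q (Fin.cons 1 b) = baseWt (u + p) p q b := by
  simp only [baseWt, prod_filter, Fin.prod_univ_succ, Fin.cons_zero, Fin.cons_succ,
    card_filter_lt_succ_cons, card_filter_succ_lt_cons, one_ne_zero, if_false, if_true, one_mul]
  refine prod_congr rfl fun i _ => ?_
  split <;> push_cast <;> ring

end Cons

lemma sum_fin_two_cons {m : ℕ} (f : (Fin (m + 1) → Fin 2) → ℝ) :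
    ∑ a, f a
      = ∑ b : Fin m → Fin 2, f (Fin.cons 0 b) + ∑ b : Fin m → Fin 2, f (Fin.cons 1 b) := by
  rw [← (Fin.consEquiv fun _ => Fin 2).sum_comp, Fintype.sum_prod_type, Fin.sum_univ_two]
  rfl

lemma partitionSum_zero_right (m : ℕ) (u p q : ℝ) : partitionSum m 0 u p q = u ^ m := by
  have hzero : univ.filter (fun a : Fin m → Fin 2 => ones a = 0) = {0} := by
    ext a
    simp only [ones, mem_filter, mem_univ, true_and, card_eq_zero, filter_eq_empty_iff,
      mem_singleton, funext_iff, Pi.zero_apply]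
    exact forall_congr' fun i => by generalize a i = x; fin_cases x <;> simp
  simp [partitionSum, hzero, baseWt]

lemma partitionSum_zero_succ (n : ℕ) (u p q : ℝ) : partitionSum 0 (n + 1) u p q = 0 := by
  simp [partitionSum, ones]

lemma partitionSum_succ_succ (m n : ℕ) (u p q : ℝ) :
    partitionSum (m + 1) (n + 1) u p q
      = (u + q * (n + 1)) * partitionSum m (n + 1) u p q + partitionSum m n (u + p) p q := by
  simp only [partitionSum, sum_filter, sum_fin_two_cons, mul_sum, ones_cons, baseWt_cons_zero,
    baseWt_cons_one, zero_ne_one, if_false, if_true, zero_add, add_comm 1, Nat.add_right_cancel_iff]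
  congr 1
  refine sum_congr rfl fun b _ => ?_
  split_ifs with h
  · rw [h]; push_cast; ring
  · rw [mul_zero]

noncomputable def signedInvBinom (n j : ℕ) : ℝ :=
  (-1) ^ (n - j) / ((j.factorial : ℝ) * ((n - j).factorial : ℝ))

lemma sum_signedInvBinom_eq_zero {N : ℕ} (hN : N ≠ 0) :
    ∑ j ∈ range (N + 1), signedInvBinom N j = 0 := by
  calc ∑ j ∈ range (N + 1), signedInvBinom N j
      = (∑ j ∈ range (N + 1), 1 ^ j * (-1 : ℝ) ^ (N - j) * N.choose j) / N.factorial := by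
        rw [sum_div]
        refine sum_congr rfl fun j hj => ?_
        rw [Nat.cast_choose ℝ (Nat.lt_succ_iff.mp (mem_range.mp hj)), signedInvBinom, one_pow]
        field_simp
    _ = 0 := by rw [← add_pow]; simp [hN]

lemma succ_mul_signedInvBinom_succ (n j : ℕ) :
    (j + 1) * signedInvBinom (n + 1) (j + 1) = signedInvBinom n j := by
  rw [signedInvBinom, signedInvBinom, Nat.add_sub_add_right, Nat.factorial_succ]
  push_cast
  field_simp

noncomputable def explicitTerm (m n : ℕ) (u p q : ℝ) (j : ℕ) : ℝ :=
  signedInvBinom n j * (u + j * p + ((n - j : ℕ) : ℝ) * q) ^ m / (p - q) ^ n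

noncomputable def explicitSum (m n : ℕ) (u p q : ℝ) : ℝ :=
  ∑ j ∈ range (n + 1), explicitTerm m n u p q j

lemma explicitSum_zero_right (m : ℕ) (u p q : ℝ) : explicitSum m 0 u p q = u ^ m := by
  simp [explicitSum, explicitTerm, signedInvBinom]

lemma explicitSum_zero_succ (n : ℕ) (u p q : ℝ) : explicitSum 0 (n + 1) u p q = 0 := by
  simp only [explicitSum, explicitTerm, pow_zero, mul_one, ← sum_div,
    sum_signedInvBinom_eq_zero n.succ_ne_zero, zero_div]

lemma explicitTerm_succ_zero (m n : ℕ) (u p q : ℝ) :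
    explicitTerm (m + 1) (n + 1) u p q 0
      = (u + q * (n + 1)) * explicitTerm m (n + 1) u p q 0 := by
  simp only [explicitTerm, Nat.sub_zero]
  push_cast
  ring

lemma explicitTerm_succ_succ {p q : ℝ} (hpq : p ≠ q) (m n : ℕ) (u : ℝ) {j : ℕ}
    (hj : j ≤ n) :
    explicitTerm (m + 1) (n + 1) u p q (j + 1)
      = (u + q * (n + 1)) * explicitTerm m (n + 1) u p q (j + 1)
        + explicitTerm m n (u + p) p q j := by
  have hsub : ((n + 1 - (j + 1) : ℕ) : ℝ) = n - j := by
    rw [Nat.add_sub_add_right, Nat.cast_sub hj]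
  have hpq' : p - q ≠ 0 := sub_ne_zero.mpr hpq
  simp only [explicitTerm, hsub, Nat.cast_sub hj, ← succ_mul_signedInvBinom_succ n j]
  push_cast
  field_simp
  ring

lemma explicitSum_succ_succ {p q : ℝ} (hpq : p ≠ q) (m n : ℕ) (u : ℝ) :
    explicitSum (m + 1) (n + 1) u p q
      = (u + q * (n + 1)) * explicitSum m (n + 1) u p q + explicitSum m n (u + p) p q := by
  rw [explicitSum, explicitSum, explicitSum, sum_range_succ', sum_range_succ' _ (n + 1),
    sum_congr rfl fun j hj => explicitTerm_succ_succ hpq m n u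
      (Nat.lt_succ_iff.mp (mem_range.mp hj)),
    sum_add_distrib, explicitTerm_succ_zero, ← mul_sum]
  ring

lemma partitionSum_eq_explicitSum {p q : ℝ} (hpq : p ≠ q) :
    ∀ m n u, partitionSum m n u p q = explicitSum m n u p q := by
  intro m
  induction m with
  | zero =>
    rintro (_ | n) u
    · rw [partitionSum_zero_right, explicitSum_zero_right]
    · rw [partitionSum_zero_succ, explicitSum_zero_succ]
  | succ m ih =>
    rintro (_ | n) u
    · rw [partitionSum_zero_right, explicitSum_zero_right]
    · rw [partitionSum_succ_succ, explicitSum_succ_succ hpq, ih, ih]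

theorem R_explicit_general (L n : ℕ) (p q : ℝ) (hpq : p ≠ q) :
    R L n p q = ∑ j ∈ Finset.range (n + 1),
      ((-1 : ℝ)) ^ (n - j) / ((j.factorial : ℝ) * ((n - j).factorial : ℝ))
        * (1 + (j : ℝ) * p + ((n - j : ℕ) : ℝ) * q) ^ (L - 1) / (p - q) ^ n :=
  partitionSum_eq_explicitSum hpq (L - 1) n 1

/-- the explicit formula for the restricted partition function. -/
theorem R_explicit (L n : ℕ) (h : n < L) (p q : ℝ) (hpq : p ≠ q) :
    R L n p q = ∑ j ∈ Finset.range (n + 1),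
      ((-1 : ℝ)) ^ (n - j) / ((j.factorial : ℝ) * ((n - j).factorial : ℝ))
        * (1 + (j : ℝ) * p + ((n - j : ℕ) : ℝ) * q) ^ (L - 1) / (p - q) ^ n :=
  R_explicit_general L n p q hpq
end

section
/- Let L ≥ 2 and 0 ≤ n ≤ L−2 be integers and let p, q be real parameters. Then ∑_{a} ( p·w_{p,q}((0) ++ a) − q·w_{p,q}(a ++ (0)) ) = (p − q) · R(L−1, n; p, q), where the sum runs over all words a of length L−2 with entries in {0,1} having exactly n ones, and (0) ++ a (resp. a ++ (0)) denotes the word obtained by prepending (resp. appending) a single 0 to a. (This identity says that the stationary current of the tracer particle equals (p−q)·R(L−1,n;p,q)/Z_{L,n}, where Z_{L,n} = L·R(L,n;p,q).) -/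
/-!
Prepending a `0` to a word `a` with `n` ones adds one factor `1 + q·n` to its weight (all `n` ones
lie to its right) and leaves the other factors unchanged; appending a `0` adds a factor `1 + p·n`.
Hence each summand equals `(p(1 + qn) − q(1 + pn)) · wt a = (p − q) · wt a`.
-/

open Finset

lemma wt_comp_cast (p q : ℝ) {m m' : ℕ} (h : m = m') (a : Fin m' → Fin 2) :
    wt p q (a ∘ Fin.cast h) = wt p q a := by
  subst h
  rfl

lemma wt_cons_zero (p q : ℝ) {m : ℕ} (a : Fin m → Fin 2) :
    wt p q (Fin.cons (0 : Fin 2) a) = (1 + q * ones a) * wt p q a := by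
  have h01 : (0 : Fin 2) ≠ 1 := by decide
  unfold wt ones
  rw [prod_filter, prod_filter, Fin.prod_univ_succ]
  congr 1
  · simp [-sum_boole, card_filter, Fin.sum_univ_succ, Fin.succ_pos, h01]
  · refine prod_congr rfl fun i _ => ?_
    by_cases hai : a i = 0
    · simp [-sum_boole, hai, card_filter, Fin.sum_univ_succ, h01]
    · simp [hai]

lemma wt_snoc_zero (p q : ℝ) {m : ℕ} (a : Fin m → Fin 2) :
    wt p q (Fin.snoc a (0 : Fin 2)) = (1 + p * ones a) * wt p q a := by
  have h01 : (0 : Fin 2) ≠ 1 := by decide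
  have not_last_lt (j : Fin m) : ¬ Fin.last m < j.castSucc := (Fin.castSucc_lt_last j).asymm
  unfold wt ones
  rw [prod_filter, prod_filter, Fin.prod_univ_castSucc, mul_comm]
  congr 1
  · simp [-sum_boole, card_filter, Fin.sum_univ_castSucc, h01, not_last_lt]
  · refine prod_congr rfl fun i _ => ?_
    by_cases hai : a i = 0
    · simp [-sum_boole, hai, card_filter, Fin.sum_univ_castSucc, h01, not_last_lt i]
    · simp [hai]

lemma wt_append_zero_left (p q : ℝ) {m : ℕ} (a : Fin m → Fin 2) :
    wt p q (Fin.append ![(0 : Fin 2)] a) = (1 + q * ones a) * wt p q a := by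
  rw [Fin.append_left_eq_cons, wt_comp_cast]
  exact wt_cons_zero p q a

lemma wt_append_zero_right (p q : ℝ) {m : ℕ} (a : Fin m → Fin 2) :
    wt p q (Fin.append a ![(0 : Fin 2)]) = (1 + p * ones a) * wt p q a := by
  rw [Fin.append_right_eq_snoc]
  exact wt_snoc_zero p q a

theorem tracer_current_general (L n : ℕ) (p q : ℝ) :
    (∑ a ∈ univ.filter (fun a : Fin (L - 2) → Fin 2 => ones a = n),
       (p * wt p q (Fin.append ![(0 : Fin 2)] a)
         - q * wt p q (Fin.append a ![(0 : Fin 2)])))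
    = (p - q) * R (L - 1) n p q := by
  rw [R, mul_sum]
  refine sum_congr rfl fun a ha => ?_
  rw [wt_append_zero_left, wt_append_zero_right, (mem_filter.mp ha).2]
  ring

/-- the identity giving the stationary current of the tracer particle. -/
theorem tracer_current (L n : ℕ) (hL : 2 ≤ L) (hn : n ≤ L - 2) (p q : ℝ) :
    (∑ a ∈ univ.filter (fun a : Fin (L - 2) → Fin 2 => ones a = n),
       (p * wt p q (Fin.append ![(0 : Fin 2)] a)
         - q * wt p q (Fin.append a ![(0 : Fin 2)])))
    = (p - q) * R (L - 1) n p q :=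
  tracer_current_general L n p q
end

section
/- Let L > n ≥ 1 be integers and fix a position k with 1 ≤ k ≤ L−1. Then, for the parameter values p = 1 and q = 0: ∑_{a : a_k = 1} w_{1,0}(a) = ∑_{j=0}^{L−n−1} C(L−1−k, j) · S(L−j−1, n), where the left-hand sum runs over all words a of length L−1 with entries in {0,1} having exactly n ones and a_k = 1, C(·,·) denotes the binomial coefficient, and S(m, r) is the Stirling number of the second kind. -/
open Finset

/-- The Stirling number of the second kind `S(m, k)`: the number of partitions of an
`m`-element set into exactly `k` nonempty blocks. -/
noncomputable def stirling (m k : ℕ) : ℕ :=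
  (univ.filter
    (fun P : Finpartition (univ : Finset (Fin m)) => P.parts.card = k)).card

/-!
Appending a letter to a word multiplies its `(1, 0)`-weight by `1 + #ones` if the letter is `0`
and leaves it unchanged if the letter is `1`. Hence the total weight of the words of length `m`
with `n` ones obeys the recurrence of `S(m + 1, n + 1)`, while the weight `A(m, n)` of those
carrying a `1` at a fixed position `i < m` obeys `A(m + 1, n + 1) = A(m, n) + (n + 2) A(m, n + 1)`
and starts from `A(i + 1, n) = S(i + 1, n)`. Pascal's rule shows that the binomial sum obeys the
same recurrence. On the other side, the Finpartition count obeys the Stirling recurrence: a new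
element either forms a singleton block or joins one of the blocks of the remaining partition.
-/

namespace Finpartition

variable {α : Type*} [DecidableEq α] {a : α} {s : Finset α}

def eraseElem (ha : a ∉ s) (P : Finpartition (insert a s)) : Finpartition s :=
  (P.avoid {a}).copy (by rw [← erase_eq, erase_insert ha])

def insertIntoPart (ha : a ∉ s) (Q : Finpartition s) {t : Finset α} (ht : t ∈ Q.parts) :
    Finpartition (insert a s) where
  parts := insert (insert a t) (Q.parts.erase t)
  supIndep := by
    rw [supIndep_iff_pairwiseDisjoint, coe_insert]
    refine (Q.disjoint.subset (by simp)).insert fun u hu _ => ?_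
    obtain ⟨hut, hu⟩ := mem_erase.1 hu
    exact disjoint_insert_left.2 ⟨fun h => ha (Q.le hu h), Q.disjoint ht hu (Ne.symm hut)⟩
  sup_parts := by
    conv_rhs => rw [← Q.sup_parts, ← insert_erase ht, sup_insert]
    simp only [sup_insert, id, sup_eq_union, insert_union]
  bot_notMem h := (mem_insert.1 h).elim (fun h => insert_ne_empty a t h.symm)
    fun h => Q.bot_notMem (mem_of_mem_erase h)

def extendSingleton (ha : a ∉ s) (Q : Finpartition s) : Finpartition (insert a s) :=
  Q.extend (singleton_ne_empty a) (disjoint_singleton_right.2 ha) (by ext; simp)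

lemma parts_eraseElem (ha : a ∉ s) (P : Finpartition (insert a s)) :
    (P.eraseElem ha).parts =
      (insert ((P.part a).erase a) (P.parts.erase (P.part a))).erase ∅ := by
  have hpa : P.part a ∈ P.parts := P.part_mem.2 (mem_insert_self a s)
  have hmem : ∀ {d}, d ∈ P.parts → (a ∈ d ↔ d = P.part a) := fun hd =>
    ⟨fun h => (P.part_eq_of_mem hd h).symm, fun h => h ▸ P.mem_part (mem_insert_self a s)⟩
  have hsub : ∀ d : Finset α, d ⊆ {a} ↔ d.erase a = ∅ := fun d => by
    rw [subset_singleton_iff, erase_eq_empty_iff]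
  ext c
  simp only [eraseElem, copy_parts, mem_avoid, ← erase_eq, hsub, mem_erase, mem_insert]
  constructor
  · rintro ⟨d, hd, hda, rfl⟩
    refine ⟨hda, ?_⟩
    by_cases had : a ∈ d
    · exact Or.inl (by rw [(hmem hd).1 had])
    · rw [erase_eq_of_notMem had]
      exact Or.inr ⟨fun h => had ((hmem hd).2 h), hd⟩
  · rintro ⟨hc, rfl | ⟨hcp, hc'⟩⟩
    · exact ⟨_, hpa, hc, rfl⟩
    · have had : a ∉ c := fun h => hcp ((hmem hc').1 h)
      exact ⟨c, hc', by rwa [erase_eq_of_notMem had], erase_eq_of_notMem had⟩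

lemma parts_eraseElem_of_singleton_mem (ha : a ∉ s) {P : Finpartition (insert a s)}
    (h : {a} ∈ P.parts) :
    (P.eraseElem ha).parts = P.parts.erase {a} := by
  rw [parts_eraseElem, P.part_eq_of_mem h (mem_singleton_self a), erase_singleton,
    erase_insert_eq_erase,
    erase_eq_of_notMem fun h' => P.empty_notMem_parts (mem_of_mem_erase h')]

lemma parts_eraseElem_of_singleton_notMem (ha : a ∉ s) {P : Finpartition (insert a s)}
    (h : {a} ∉ P.parts) :
    (P.eraseElem ha).parts = insert ((P.part a).erase a) (P.parts.erase (P.part a)) := by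
  have hpa : P.part a ∈ P.parts := P.part_mem.2 (mem_insert_self a s)
  rw [parts_eraseElem, erase_eq_of_notMem]
  intro h'
  rcases mem_insert.1 h' with h' | h'
  · rcases (erase_eq_empty_iff _ _).1 h'.symm with h' | h'
    · exact P.empty_notMem_parts (h' ▸ hpa)
    · exact h (h' ▸ hpa)
  · exact P.empty_notMem_parts (mem_of_mem_erase h')

lemma erase_part_mem_parts_eraseElem (ha : a ∉ s) {P : Finpartition (insert a s)}
    (h : {a} ∉ P.parts) :
    (P.part a).erase a ∈ (P.eraseElem ha).parts := by
  rw [parts_eraseElem_of_singleton_notMem ha h]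
  exact mem_insert_self _ _

lemma erase_part_notMem_erase_parts (P : Finpartition (insert a s)) :
    (P.part a).erase a ∉ P.parts.erase (P.part a) := by
  intro hmem
  obtain ⟨hne, hd⟩ := mem_erase.1 hmem
  obtain ⟨x, hx⟩ := P.nonempty_of_mem_parts hd
  exact hne (P.eq_of_mem_parts hd (P.part_mem.2 (mem_insert_self a s)) hx (mem_of_mem_erase hx))

lemma insert_notMem_erase_parts (ha : a ∉ s) (Q : Finpartition s) (t : Finset α) :
    insert a t ∉ Q.parts.erase t :=
  fun h => ha (Q.le (mem_of_mem_erase h) (mem_insert_self a t))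

lemma card_parts_insertIntoPart (ha : a ∉ s) (Q : Finpartition s) {t : Finset α}
    (ht : t ∈ Q.parts) :
    #(Q.insertIntoPart ha ht).parts = #Q.parts := by
  rw [insertIntoPart, card_insert_of_notMem (insert_notMem_erase_parts ha Q t),
    card_erase_add_one ht]

lemma singleton_notMem_parts_insertIntoPart (ha : a ∉ s) (Q : Finpartition s) {t : Finset α}
    (ht : t ∈ Q.parts) : {a} ∉ (Q.insertIntoPart ha ht).parts := by
  intro h
  rcases mem_insert.1 h with h | h
  · obtain ⟨x, hx⟩ := Q.nonempty_of_mem_parts ht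
    have hxa : x = a := mem_singleton.1 (h ▸ mem_insert_of_mem hx)
    exact ha (hxa ▸ Q.le ht hx)
  · exact ha (Q.le (mem_of_mem_erase h) (mem_singleton_self a))

lemma part_insertIntoPart (ha : a ∉ s) (Q : Finpartition s) {t : Finset α} (ht : t ∈ Q.parts) :
    (Q.insertIntoPart ha ht).part a = insert a t :=
  part_eq_of_mem _ (mem_insert_self _ _) (mem_insert_self a t)

lemma eraseElem_insertIntoPart (ha : a ∉ s) (Q : Finpartition s) {t : Finset α}
    (ht : t ∈ Q.parts) :
    (Q.insertIntoPart ha ht).eraseElem ha = Q := by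
  have hat : a ∉ t := fun h => ha (Q.le ht h)
  ext1
  rw [parts_eraseElem_of_singleton_notMem ha (singleton_notMem_parts_insertIntoPart ha Q ht),
    part_insertIntoPart, erase_insert hat, insertIntoPart,
    erase_insert (insert_notMem_erase_parts ha Q t), insert_erase ht]

lemma insertIntoPart_eraseElem (ha : a ∉ s) {P : Finpartition (insert a s)}
    (h : {a} ∉ P.parts) :
    (P.eraseElem ha).insertIntoPart ha (erase_part_mem_parts_eraseElem ha h) = P := by
  ext1
  rw [insertIntoPart]
  dsimp only
  rw [insert_erase (P.mem_part (mem_insert_self a s)), parts_eraseElem_of_singleton_notMem ha h,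
    erase_insert (erase_part_notMem_erase_parts P),
    insert_erase (P.part_mem.2 (mem_insert_self a s))]

lemma eraseElem_extendSingleton (ha : a ∉ s) (Q : Finpartition s) :
    (Q.extendSingleton ha).eraseElem ha = Q := by
  ext1
  rw [parts_eraseElem_of_singleton_mem ha (mem_insert_self _ _)]
  exact erase_insert fun h => ha (Q.le h (mem_singleton_self a))

lemma extendSingleton_eraseElem (ha : a ∉ s) {P : Finpartition (insert a s)}
    (h : {a} ∈ P.parts) :
    (P.eraseElem ha).extendSingleton ha = P := by
  ext1
  exact (congrArg (insert {a}) (parts_eraseElem_of_singleton_mem ha h)).trans (insert_erase h)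

lemma card_filter_singleton_mem_parts (ha : a ∉ s) (k : ℕ) :
    #{P : Finpartition (insert a s) | #P.parts = k + 1 ∧ {a} ∈ P.parts} =
      #{Q : Finpartition s | #Q.parts = k} := by
  refine card_nbij' (eraseElem ha) (extendSingleton ha) (fun P hP => ?_) (fun Q hQ => ?_)
    (fun P hP => ?_) (fun Q _ => eraseElem_extendSingleton ha Q)
  · simp only [mem_coe, mem_filter, mem_univ, true_and] at hP ⊢
    rw [parts_eraseElem_of_singleton_mem ha hP.2, card_erase_of_mem hP.2, hP.1,
      Nat.add_sub_cancel]
  · simp only [mem_coe, mem_filter, mem_univ, true_and] at hQ ⊢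
    exact ⟨by rw [extendSingleton, card_extend, hQ], mem_insert_self _ _⟩
  · simp only [mem_coe, mem_filter, mem_univ, true_and] at hP
    exact extendSingleton_eraseElem ha hP.2

lemma card_filter_singleton_notMem_parts (ha : a ∉ s) (k : ℕ) :
    #{P : Finpartition (insert a s) | #P.parts = k + 1 ∧ {a} ∉ P.parts} =
      (k + 1) * #{Q : Finpartition s | #Q.parts = k + 1} := by
  have hsigma : #(({Q : Finpartition s | #Q.parts = k + 1} : Finset _).sigma parts) =
      (k + 1) * #{Q : Finpartition s | #Q.parts = k + 1} := by
    rw [card_sigma, sum_congr rfl fun Q hQ => (mem_filter.1 hQ).2, sum_const, smul_eq_mul,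
      mul_comm]
  rw [← hsigma]
  refine card_bij' (fun P _ => ⟨P.eraseElem ha, (P.part a).erase a⟩)
    (fun x hx => x.1.insertIntoPart ha (mem_sigma.1 hx).2) ?_ ?_ ?_ ?_
  · simp only [mem_filter, mem_univ, true_and, mem_sigma]
    rintro P ⟨hcard, h⟩
    refine ⟨?_, erase_part_mem_parts_eraseElem ha h⟩
    rw [parts_eraseElem_of_singleton_notMem ha h, card_insert_of_notMem
      (erase_part_notMem_erase_parts P), card_erase_add_one (P.part_mem.2 (mem_insert_self a s)),
      hcard]
  · rintro ⟨Q, t⟩ hx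
    obtain ⟨hQ, ht⟩ := mem_sigma.1 hx
    simp only [mem_filter, mem_univ, true_and] at hQ ⊢
    exact ⟨(card_parts_insertIntoPart ha Q ht).trans hQ,
      singleton_notMem_parts_insertIntoPart ha Q ht⟩
  · simp only [mem_filter, mem_univ, true_and]
    exact fun P hP => insertIntoPart_eraseElem ha hP.2
  · rintro ⟨Q, t⟩ hx
    have ht := (mem_sigma.1 hx).2
    have hat : a ∉ t := fun h => ha (Q.le ht h)
    exact Sigma.ext (eraseElem_insertIntoPart ha Q ht)
      (heq_of_eq (by rw [part_insertIntoPart, erase_insert hat]))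

lemma card_filter_card_parts_insert (ha : a ∉ s) (k : ℕ) :
    #{P : Finpartition (insert a s) | #P.parts = k + 1} =
      #{Q : Finpartition s | #Q.parts = k} +
        (k + 1) * #{Q : Finpartition s | #Q.parts = k + 1} := by
  rw [← card_filter_singleton_mem_parts ha, ← card_filter_singleton_notMem_parts ha,
    ← card_filter_add_card_filter_not (fun P : Finpartition (insert a s) => {a} ∈ P.parts),
    filter_filter, filter_filter]

theorem card_filter_card_parts_eq_stirlingSecond (s : Finset α) (k : ℕ) :
    #{P : Finpartition s | #P.parts = k} = (#s).stirlingSecond k := by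
  induction s using Finset.induction_on generalizing k with
  | empty =>
    have hparts (P : Finpartition (∅ : Finset α)) : P.parts = ∅ := P.parts_eq_empty_iff.2 rfl
    cases k with
    | zero =>
      simpa [hparts] using Fintype.card_eq_one_iff.2
        ⟨⊥, fun P => Finpartition.ext ((hparts P).trans (hparts ⊥).symm)⟩
    | succ k => simp [hparts]
  | insert a s ha ih =>
    cases k with
    | zero =>
      rw [card_insert_of_notMem ha, Nat.stirlingSecond_succ_zero, card_eq_zero, filter_eq_empty_iff]
      exact fun P _ h => insert_ne_empty a s (P.parts_eq_empty_iff.1 (card_eq_zero.1 h))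
    | succ k =>
      rw [card_filter_card_parts_insert ha, ih, ih, card_insert_of_notMem ha,
        Nat.stirlingSecond_succ_succ, add_comm]

end Finpartition

theorem stirling_eq_stirlingSecond (m k : ℕ) : stirling m k = m.stirlingSecond k := by
  simpa [stirling] using
    Finpartition.card_filter_card_parts_eq_stirlingSecond (univ : Finset (Fin m)) k

section Words

variable {m : ℕ}

lemma sum_pi_fin_succ_eq_sum_snoc {α M : Type*} [Fintype α] [AddCommMonoid M]
    (F : (Fin (m + 1) → α) → M) :
    ∑ a, F a = ∑ b : Fin m → α, ∑ c, F (Fin.snoc b c) := by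
  rw [← (Fin.snocEquiv fun _ => α).sum_comp, Fintype.sum_prod_type, sum_comm]
  rfl

lemma card_filter_and_snoc_eq_one (b : Fin m → Fin 2) (c : Fin 2) (p : Fin (m + 1) → Prop)
    [DecidablePred p] :
    #{j | p j ∧ (Fin.snoc b c : Fin (m + 1) → Fin 2) j = 1} =
      #{j : Fin m | p j.castSucc ∧ b j = 1} + if p (Fin.last m) ∧ c = 1 then 1 else 0 := by
  rw [card_filter, card_filter, Fin.sum_univ_castSucc]
  simp only [Fin.snoc_castSucc, Fin.snoc_last]

lemma ones_snoc (b : Fin m → Fin 2) (c : Fin 2) :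
    ones (Fin.snoc b c : Fin (m + 1) → Fin 2) = ones b + if c = 1 then 1 else 0 := by
  simpa [ones] using card_filter_and_snoc_eq_one b c fun _ => True

lemma wt_one_zero_snoc (b : Fin m → Fin 2) (c : Fin 2) :
    wt 1 0 (Fin.snoc b c : Fin (m + 1) → Fin 2) =
      (if c = 0 then 1 + (ones b : ℝ) else 1) * wt 1 0 b := by
  unfold wt
  rw [prod_filter, prod_filter, Fin.prod_univ_castSucc, mul_comm]
  simp [card_filter_and_snoc_eq_one, Fin.castSucc_lt_last, ones,
    fun i : Fin m => (Fin.castSucc_lt_last i).asymm]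

lemma sum_filter_ones_init_wt (p : (Fin m → Fin 2) → Prop) [DecidablePred p] (n : ℕ) :
    ∑ a : Fin (m + 1) → Fin 2 with ones a = n ∧ p (Fin.init a), wt 1 0 a =
      ∑ b : Fin m → Fin 2 with ones b + 1 = n ∧ p b, wt 1 0 b +
        (n + 1) * ∑ b : Fin m → Fin 2 with ones b = n ∧ p b, wt 1 0 b := by
  rw [sum_filter, sum_filter, sum_filter, sum_pi_fin_succ_eq_sum_snoc, mul_sum, ← sum_add_distrib]
  refine sum_congr rfl fun b _ => ?_
  by_cases hp : p b
  · by_cases hb : ones b = n <;> by_cases hb' : ones b + 1 = n <;>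
      simp [Fin.sum_univ_two, ones_snoc, wt_one_zero_snoc, hp, hb, hb', add_comm (1 : ℝ)]
  · simp [hp]

end Words

noncomputable def weightSum (m n : ℕ) : ℝ :=
  ∑ a : Fin m → Fin 2 with ones a = n, wt 1 0 a

noncomputable def weightSumAt (m n : ℕ) (i : Fin m) : ℝ :=
  ∑ a : Fin m → Fin 2 with ones a = n ∧ a i = 1, wt 1 0 a

lemma weightSum_succ_zero (m : ℕ) : weightSum (m + 1) 0 = weightSum m 0 := by
  simpa [weightSum] using sum_filter_ones_init_wt (fun _ : Fin m → Fin 2 => True) 0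

lemma weightSum_succ_succ (m n : ℕ) :
    weightSum (m + 1) (n + 1) = weightSum m n + (n + 2) * weightSum m (n + 1) := by
  have := sum_filter_ones_init_wt (fun _ : Fin m → Fin 2 => True) (n + 1)
  simp only [and_true, add_left_inj] at this
  rw [weightSum, this, weightSum, weightSum]
  push_cast
  ring

lemma weightSumAt_castSucc (m n : ℕ) (i : Fin m) :
    weightSumAt (m + 1) (n + 1) i.castSucc =
      weightSumAt m n i + (n + 2) * weightSumAt m (n + 1) i := by
  have := sum_filter_ones_init_wt (fun b : Fin m → Fin 2 => b i = 1) (n + 1)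
  simp only [add_left_inj] at this
  refine this.trans ?_
  rw [weightSumAt, weightSumAt]
  push_cast
  ring

lemma weightSumAt_last (m n : ℕ) : weightSumAt (m + 1) (n + 1) (Fin.last m) = weightSum m n := by
  rw [weightSumAt, weightSum, sum_filter, sum_filter, sum_pi_fin_succ_eq_sum_snoc]
  simp [Fin.sum_univ_two, ones_snoc, wt_one_zero_snoc]

lemma weightSumAt_zero (m : ℕ) (i : Fin m) : weightSumAt m 0 i = 0 := by
  refine sum_eq_zero fun a ha => ?_
  obtain ⟨hones, hi⟩ := (mem_filter.1 ha).2
  exact absurd (card_eq_zero.1 hones ▸ mem_filter.2 ⟨mem_univ i, hi⟩) (notMem_empty i)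

theorem weightSum_eq_stirlingSecond (m n : ℕ) :
    weightSum m n = (m + 1).stirlingSecond (n + 1) := by
  induction m generalizing n with
  | zero =>
    cases n with
    | zero => simp [weightSum, ones, wt, Nat.stirlingSecond_self]
    | succ n => simp [weightSum, ones, Nat.stirlingSecond_eq_zero_of_lt]
  | succ m ih =>
    cases n with
    | zero =>
      rw [weightSum_succ_zero, ih, Nat.stirlingSecond_one_right, Nat.stirlingSecond_one_right]
    | succ n =>
      rw [weightSum_succ_succ, ih, ih, Nat.stirlingSecond_succ_succ (m + 1)]
      push_cast
      ring

lemma sum_range_choose_succ_mul {R : Type*} [Semiring R] (c : ℕ) (f : ℕ → R) :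
    ∑ j ∈ range (c + 2), ((c + 1).choose j : R) * f j =
      ∑ j ∈ range (c + 1), (c.choose j : R) * (f j + f (j + 1)) := by
  have hpeel : ∑ j ∈ range (c + 1), (c.choose j : R) * f j =
      ∑ j ∈ range (c + 1), (c.choose (j + 1) : R) * f (j + 1) + f 0 := by
    rw [sum_range_succ', sum_range_succ (fun j => (c.choose (j + 1) : R) * f (j + 1)),
      Nat.choose_succ_self]
    simp
  simp only [sum_range_succ' _ (c + 1), mul_add, sum_add_distrib, hpeel]
  simp only [Nat.choose_succ_succ', Nat.cast_add, add_mul, sum_add_distrib, Nat.choose_zero_right,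
    Nat.cast_one, one_mul]
  abel

lemma sum_range_eq_sum_range_of_eq_zero {M : Type*} [AddCommMonoid M] {f : ℕ → M} {a b : ℕ}
    (h : ∀ j, min a b ≤ j → f j = 0) : ∑ j ∈ range a, f j = ∑ j ∈ range b, f j := by
  have hmin {c : ℕ} (hc : min a b ≤ c) :
      ∑ j ∈ range c, f j = ∑ j ∈ range (min a b), f j :=
    (sum_subset (range_mono hc) fun j _ hj => h j (not_lt.1 (mt mem_range.2 hj))).symm
  rw [hmin (min_le_left a b), hmin (min_le_right a b)]

theorem weightSumAt_eq_sum (m n : ℕ) (i : Fin m) :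
    weightSumAt m n i =
      ∑ j ∈ range (m - i), ((m - 1 - i).choose j : ℝ) * (m - j).stirlingSecond n := by
  induction m generalizing n with
  | zero => exact i.elim0
  | succ m ih =>
    cases i using Fin.lastCases with
    | last =>
      rw [Fin.val_last, show m + 1 - m = 1 by omega, sum_range_one, Nat.choose_zero_right,
        Nat.cast_one, one_mul, Nat.sub_zero]
      cases n with
      | zero => simp [weightSumAt_zero]
      | succ n => rw [weightSumAt_last, weightSum_eq_stirlingSecond]
    | cast i =>
      cases n with
      | zero =>
        rw [weightSumAt_zero]
        refine (sum_eq_zero fun j hj => ?_).symm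
        rw [Fin.val_castSucc, mem_range] at hj
        rw [show m + 1 - j = (m - j) + 1 by omega, Nat.stirlingSecond_succ_zero, Nat.cast_zero,
          mul_zero]
      | succ n =>
        rw [weightSumAt_castSucc, ih, ih, Fin.val_castSucc,
          show m + 1 - i = (m - 1 - i) + 2 by omega, show m + 1 - 1 - i = (m - 1 - i) + 1 by omega,
          sum_range_choose_succ_mul, show m - i = (m - 1 - i) + 1 by omega, mul_sum,
          ← sum_add_distrib]
        refine sum_congr rfl fun j hj => ?_
        rw [mem_range] at hj
        rw [show m + 1 - j = (m - j) + 1 by omega, show m + 1 - (j + 1) = m - j by omega,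
          Nat.stirlingSecond_succ_succ]
        push_cast
        ring

/-- at `p = 1`, `q = 0`, the weighted sum over configurations with an
ordinary particle at word position `k` (index `k - 1`) in terms of Stirling numbers. -/
theorem density_front_p1_q0 (L n k : ℕ) (hk1 : 1 ≤ k) (hk2 : k ≤ L - 1) :
    (∑ a ∈ univ.filter (fun a : Fin (L - 1) → Fin 2 =>
        ones a = n ∧ a ⟨k - 1, by omega⟩ = 1), wt 1 0 a)
    = ∑ j ∈ Finset.range (L - n),
        (Nat.choose (L - 1 - k) j : ℝ) * (stirling (L - j - 1) n : ℝ) := by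
  have key := weightSumAt_eq_sum (L - 1) n ⟨k - 1, by omega⟩
  rw [Fin.val_mk, show L - 1 - (k - 1) = L - k by omega,
    show L - 1 - 1 - (k - 1) = L - 1 - k by omega] at key
  simp only [stirling_eq_stirlingSecond, Nat.sub_right_comm _ _ 1]
  refine key.trans (sum_range_eq_sum_range_of_eq_zero fun j hj => ?_)
  -- past `L - k` the binomial coefficient vanishes, past `L - n` the Stirling number does
  rcases le_or_gt (L - k) j with hj' | hj'
  · rw [Nat.choose_eq_zero_of_lt (by omega), Nat.cast_zero, zero_mul]
  · rw [Nat.stirlingSecond_eq_zero_of_lt (by omega), Nat.cast_zero, mul_zero]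
end
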